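/- arXiv:2001.07946 — 11 statements merged into one kernel-verified Lean document; each statement's English description precedes it below -/
import Mathlib

section
/- Let E be a real finite-dimensional normed vector space, let 0 < ν ≤ 1, let L ≥ 0, and let f : E → ℝ be differentiable and ν-approximable with parameter L, i.e. |f(y) − f(x) − ⟨f'(x), y − x⟩| ≤ (L/(1+ν))·‖y − x‖^{1+ν} for all x, y ∈ E. Then f has ν-Hölder continuous gradient with constant 2^{1−ν}·((1+ν)/ν)^ν·L, i.e. ‖f'(x) − f'(y)‖* ≤ 2^{1−ν}·((1+ν)/ν)^ν·L·‖x − y‖^ν for all x, y ∈ E. -/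
/-! For every `z` and `h`, `(f' x - f' y) h` is an alternating sum of the four first-order
remainders of `f` at `x` and at `y`, evaluated at `z + h` and at `z`. Taking `z = (x + y - h) / 2`
makes all four displacements of norm at most `(‖x - y‖ + ‖h‖) / 2`, so
`|(f' x - f' y) h| ≤ 4 L / (1 + ν) * ((‖x - y‖ + ‖h‖) / 2) ^ (1 + ν)`.
Dividing by `‖h‖` and taking `‖h‖ = ‖x - y‖ / ν`, which minimizes the resulting bound,
gives the Hölder constant. -/

open Real

section

variable {E : Type*} [NormedAddCommGroup E] [NormedSpace ℝ E]

theorem ContinuousLinearMap.opNorm_le_of_sphere {F : Type*} [NormedAddCommGroup F]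
    [NormedSpace ℝ F] {φ : E →L[ℝ] F} {t M : ℝ} (ht : 0 < t) (hM : 0 ≤ M)
    (hφ : ∀ h, ‖h‖ = t → ‖φ h‖ ≤ M * t) : ‖φ‖ ≤ M := by
  refine φ.opNorm_le_of_unit_norm hM fun u hu => ?_
  have := hφ (t • u) (by rw [norm_smul, hu, norm_of_nonneg ht.le, mul_one])
  rw [map_smul, norm_smul, norm_of_nonneg ht.le, mul_comm M] at this
  exact le_of_mul_le_mul_left this ht

theorem abs_sub_apply_le_four_remainders (f : E → ℝ) (f' : E → E →L[ℝ] ℝ) (x y z h : E) :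
    |(f' x - f' y) h| ≤
      |f (z + h) - f y - f' y (z + h - y)| + |f z - f y - f' y (z - y)| +
        (|f (z + h) - f x - f' x (z + h - x)| + |f z - f x - f' x (z - x)|) := by
  have hx : f' x (z + h - x) - f' x (z - x) = f' x h := by rw [← map_sub]; congr 1; abel
  have hy : f' y (z + h - y) - f' y (z - y) = f' y h := by rw [← map_sub]; congr 1; abel
  have hsplit : (f' x - f' y) h =
      ((f (z + h) - f y - f' y (z + h - y)) - (f z - f y - f' y (z - y))) -
        ((f (z + h) - f x - f' x (z + h - x)) - (f z - f x - f' x (z - x))) := by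
    rw [sub_apply]; linarith
  rw [hsplit]
  exact (abs_sub _ _).trans (add_le_add (abs_sub _ _) (abs_sub _ _))

theorem abs_sub_apply_le_of_remainder_le {ω : ℝ → ℝ} (hω : MonotoneOn ω (Set.Ici 0))
    {f : E → ℝ} {f' : E → E →L[ℝ] ℝ}
    (happrox : ∀ x y, |f y - f x - f' x (y - x)| ≤ ω ‖y - x‖) (x y h : E) :
    |(f' x - f' y) h| ≤ 4 * ω ((‖x - y‖ + ‖h‖) / 2) := by
  set z : E := (2 : ℝ)⁻¹ • (x + y - h)
  have remainder_le : ∀ a w : E, ‖w - a‖ ≤ (‖x - y‖ + ‖h‖) / 2 →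
      |f w - f a - f' a (w - a)| ≤ ω ((‖x - y‖ + ‖h‖) / 2) := fun a w hw =>
    (happrox a w).trans (hω (norm_nonneg _) ((norm_nonneg _).trans hw) hw)
  have half_le : ∀ u : E, ‖u‖ ≤ ‖x - y‖ + ‖h‖ → ‖(2 : ℝ)⁻¹ • u‖ ≤ (‖x - y‖ + ‖h‖) / 2 := by
    intro u hu
    rw [norm_smul, norm_inv, Real.norm_two]
    linarith
  have hyx : ‖y - x‖ = ‖x - y‖ := norm_sub_rev y x
  have h1 := remainder_le y (z + h) <| by
    rw [show z + h - y = (2 : ℝ)⁻¹ • (x - y + h) by module]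
    exact half_le _ (norm_add_le _ _)
  have h2 := remainder_le y z <| by
    rw [show z - y = (2 : ℝ)⁻¹ • (x - y - h) by module]
    exact half_le _ (norm_sub_le _ _)
  have h3 := remainder_le x (z + h) <| by
    rw [show z + h - x = (2 : ℝ)⁻¹ • (y - x + h) by module]
    exact half_le _ ((norm_add_le _ _).trans_eq (by rw [hyx]))
  have h4 := remainder_le x z <| by
    rw [show z - x = (2 : ℝ)⁻¹ • (y - x - h) by module]
    exact half_le _ ((norm_sub_le _ _).trans_eq (by rw [hyx]))
  linarith [abs_sub_apply_le_four_remainders f f' x y z h]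

end

theorem four_mul_div_mul_rpow_half_add_div_eq {ν L r : ℝ} (hν : 0 < ν) (hr : 0 ≤ r) :
    4 * (L / (1 + ν)) * ((r + r / ν) / 2) ^ (1 + ν) =
      2 ^ (1 - ν) * ((1 + ν) / ν) ^ ν * L * r ^ ν * (r / ν) := by
  have hs : (r + r / ν) / 2 = r * ((1 + ν) / ν) / 2 := by field_simp; ring
  have h1ν : (1 : ℝ) + ν ≠ 0 := by positivity
  rw [hs, rpow_add' (by positivity) h1ν, rpow_one, div_rpow (by positivity) zero_le_two,
    mul_rpow hr (by positivity), rpow_sub two_pos, rpow_one]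
  have : (0 : ℝ) < 2 ^ ν := rpow_pos_of_pos two_pos ν
  field_simp
  ring

theorem approximable_implies_holder_gradient_general
    {E : Type*} [NormedAddCommGroup E] [NormedSpace ℝ E]
    (ν L : ℝ) (hν0 : 0 < ν) (hL : 0 ≤ L)
    (f : E → ℝ) (f' : E → (E →L[ℝ] ℝ))
    (happrox : ∀ x y : E, |f y - f x - f' x (y - x)| ≤ L / (1 + ν) * ‖y - x‖ ^ (1 + ν)) :
    ∀ x y : E, ‖f' x - f' y‖ ≤ 2 ^ (1 - ν) * ((1 + ν) / ν) ^ ν * L * ‖x - y‖ ^ ν := by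
  intro x y
  rcases eq_or_ne x y with rfl | hxy
  · simp [zero_rpow hν0.ne']
  have hr : 0 < ‖x - y‖ := norm_pos_iff.mpr (sub_ne_zero.mpr hxy)
  have hω : MonotoneOn (fun s : ℝ => L / (1 + ν) * s ^ (1 + ν)) (Set.Ici 0) :=
    fun a ha _ _ hab => mul_le_mul_of_nonneg_left (rpow_le_rpow ha hab (by positivity))
      (by positivity)
  refine ContinuousLinearMap.opNorm_le_of_sphere (t := ‖x - y‖ / ν) (by positivity)
    (by positivity) fun h hh => ?_
  rw [← four_mul_div_mul_rpow_half_add_div_eq hν0 hr.le, ← hh, Real.norm_eq_abs]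
  simpa only [mul_assoc] using abs_sub_apply_le_of_remainder_le hω happrox x y h

/-- ν-approximability with parameter L implies ν-Hölder continuity of the gradient with
constant `2^(1-ν) * ((1+ν)/ν)^ν * L`. -/
theorem approximable_implies_holder_gradient
    {E : Type*} [NormedAddCommGroup E] [NormedSpace ℝ E] [FiniteDimensional ℝ E]
    (ν L : ℝ) (hν0 : 0 < ν) (hν1 : ν ≤ 1) (hL : 0 ≤ L)
    (f : E → ℝ) (f' : E → (E →L[ℝ] ℝ))
    (hdiff : ∀ x, HasFDerivAt f (f' x) x)
    (happrox : ∀ x y : E, |f y - f x - f' x (y - x)| ≤ L / (1 + ν) * ‖y - x‖ ^ (1 + ν)) :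
    ∀ x y : E, ‖f' x - f' y‖ ≤ 2 ^ (1 - ν) * ((1 + ν) / ν) ^ ν * L * ‖x - y‖ ^ ν :=
  approximable_implies_holder_gradient_general ν L hν0 hL f f' happrox
end

section
/- Let E be a real finite-dimensional normed vector space, let L ≥ 0, and let f : E → ℝ be differentiable and 0-approximable with parameter L, i.e. |f(y) − f(x) − ⟨f'(x), y − x⟩| ≤ L·‖y − x‖ for all x, y ∈ E. Then the gradient of f is bounded in oscillation by 2L, i.e. ‖f'(x) − f'(y)‖* ≤ 2L for all x, y ∈ E. -/
/-!
Subtracting the first-order expansions of `f` at `x` and at `y`, both taken at a third point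
`z`, gives `(f' x - f' y) (z - y) = r_y(z) - r_x(z) + r_x(y)` with `r_p(q) = f q - f p - f' p (q - p)`.
Hence the linear form `f' x - f' y` is bounded by `2L‖z - y‖ + 2L‖y - x‖` along `z - y`; such an
affine bound on a linear map forces its operator norm below the slope `2L`, by scaling.
-/

open Filter Topology

theorem ContinuousLinearMap.opNorm_le_of_norm_apply_le_mul_add
    {E F : Type*} [SeminormedAddCommGroup E] [NormedSpace ℝ E]
    [SeminormedAddCommGroup F] [NormedSpace ℝ F]
    (g : E →L[ℝ] F) {a b : ℝ} (ha : 0 ≤ a) (hg : ∀ v, ‖g v‖ ≤ a * ‖v‖ + b) :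
    ‖g‖ ≤ a := by
  refine g.opNorm_le_bound ha fun v ↦ ?_
  have hscaled : ∀ t : ℝ, 0 < t → ‖g v‖ ≤ a * ‖v‖ + b / t := by
    intro t ht
    have := hg (t • v)
    rw [map_smul, norm_smul, norm_smul, Real.norm_of_nonneg ht.le] at this
    rw [← sub_le_iff_le_add', le_div_iff₀ ht]
    linarith
  have hlim : Tendsto (fun t : ℝ ↦ a * ‖v‖ + b / t) atTop (𝓝 (a * ‖v‖)) := by
    simpa using (tendsto_const_nhds (x := a * ‖v‖)).add
      ((tendsto_const_nhds (x := b)).div_atTop tendsto_id)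
  exact ge_of_tendsto hlim ((eventually_gt_atTop 0).mono hscaled)

theorem abs_sub_apply_le_of_abs_remainder_le {E : Type*} [NormedAddCommGroup E]
    [NormedSpace ℝ E] {L : ℝ} (hL : 0 ≤ L) {f : E → ℝ} {f' : E → E →L[ℝ] ℝ}
    (happrox : ∀ x y : E, |f y - f x - f' x (y - x)| ≤ L * ‖y - x‖) (x y z : E) :
    |(f' x - f' y) (z - y)| ≤ 2 * L * ‖z - y‖ + 2 * L * ‖y - x‖ := by
  have hsplit : (f' x - f' y) (z - y) =
      (f z - f y - f' y (z - y)) - (f z - f x - f' x (z - x)) + (f y - f x - f' x (y - x)) := by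
    have : z - x = (z - y) + (y - x) := by abel
    rw [sub_apply, this, map_add]
    ring
  have htri : L * ‖z - x‖ ≤ L * ‖z - y‖ + L * ‖y - x‖ := by
    rw [← mul_add]
    exact mul_le_mul_of_nonneg_left (norm_sub_le_norm_sub_add_norm_sub z y x) hL
  calc |(f' x - f' y) (z - y)|
      ≤ |f z - f y - f' y (z - y)| + |f z - f x - f' x (z - x)| + |f y - f x - f' x (y - x)| := by
        rw [hsplit]
        exact (abs_add_le _ _).trans (add_le_add_left (abs_sub _ _) _)
    _ ≤ L * ‖z - y‖ + L * ‖z - x‖ + L * ‖y - x‖ := by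
        gcongr <;> apply happrox
    _ ≤ 2 * L * ‖z - y‖ + 2 * L * ‖y - x‖ := by linarith

theorem zero_approximable_implies_bounded_gradient_oscillation_general
    {E : Type*} [NormedAddCommGroup E] [NormedSpace ℝ E]
    (L : ℝ) (hL : 0 ≤ L)
    (f : E → ℝ) (f' : E → (E →L[ℝ] ℝ))
    (happrox : ∀ x y : E, |f y - f x - f' x (y - x)| ≤ L * ‖y - x‖) :
    ∀ x y : E, ‖f' x - f' y‖ ≤ 2 * L := by
  intro x y
  refine (f' x - f' y).opNorm_le_of_norm_apply_le_mul_add (b := 2 * L * ‖y - x‖) (by positivity) fun v ↦ ?_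
  simpa [Real.norm_eq_abs] using abs_sub_apply_le_of_abs_remainder_le hL happrox x y (y + v)

/-- 0-approximability with parameter L implies the oscillation of the gradient is
bounded by 2L. -/
theorem zero_approximable_implies_bounded_gradient_oscillation
    {E : Type*} [NormedAddCommGroup E] [NormedSpace ℝ E] [FiniteDimensional ℝ E]
    (L : ℝ) (hL : 0 ≤ L)
    (f : E → ℝ) (f' : E → (E →L[ℝ] ℝ))
    (hdiff : ∀ x, HasFDerivAt f (f' x) x)
    (happrox : ∀ x y : E, |f y - f x - f' x (y - x)| ≤ L * ‖y - x‖) :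
    ∀ x y : E, ‖f' x - f' y‖ ≤ 2 * L :=
  zero_approximable_implies_bounded_gradient_oscillation_general L hL f f' happrox
end

section
/- Let E be a real finite-dimensional inner product space with norm induced by the inner product, let 0 < ν ≤ 1, let L ≥ 0, and let f : E → ℝ be differentiable and ν-approximable with parameter L, i.e. |f(y) − f(x) − ⟨f'(x), y − x⟩| ≤ (L/(1+ν))·‖y − x‖^{1+ν} for all x, y ∈ E. Then f has ν-Hölder continuous gradient with constant (2^{1−ν}/√(1+ν))·((1+ν)/ν)^{ν/2}·L, i.e. ‖f'(x) − f'(y)‖* ≤ (2^{1−ν}/√(1+ν))·((1+ν)/ν)^{ν/2}·L·‖x − y‖^ν for all x, y ∈ E. -/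
/-!
Let `e = (x - y) / 2` and let `m` be the midpoint of `x` and `y`. Adding up the four first-order
expansions of `f` at `x` and at `y` evaluated at `m ± k`, the values of `f` cancel and only
`2 (f' x - f' y) k` survives, so `(f' x - f' y) k ≤ L/(1+ν) (‖k - e‖^(1+ν) + ‖k + e‖^(1+ν))`.
By the parallelogram law and concavity of `t ↦ t^((1+ν)/2)` this is at most
`2L/(1+ν) (‖k‖² + ‖e‖²)^((1+ν)/2)`; optimising over the length of `k` (at `‖k‖ = ‖e‖/√ν`) gives
the Hölder bound on `‖f' x - f' y‖`.
-/

open Real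

theorem sub_apply_le_of_abs_taylor_remainder_le {E : Type*} [NormedAddCommGroup E]
    [NormedSpace ℝ E] (f : E → ℝ) (f' : E → E →L[ℝ] ℝ) (ω : ℝ → ℝ)
    (hω : ∀ x z : E, |f z - f x - f' x (z - x)| ≤ ω ‖z - x‖) (x y k : E) :
    (f' x - f' y) k ≤ ω ‖k - (2⁻¹ : ℝ) • (x - y)‖ + ω ‖k + (2⁻¹ : ℝ) • (x - y)‖ := by
  set e : E := (2⁻¹ : ℝ) • (x - y)
  have h₁ := abs_le.1 (hω x (x - e + k))
  have h₂ := abs_le.1 (hω y (x - e + k))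
  have h₃ := abs_le.1 (hω x (x - e - k))
  have h₄ := abs_le.1 (hω y (x - e - k))
  rw [show x - e + k - x = k - e by abel] at h₁
  rw [show x - e + k - y = k + e by module] at h₂
  rw [show x - e - k - x = -(k + e) by abel, norm_neg] at h₃
  rw [show x - e - k - y = -(k - e) by module, norm_neg] at h₄
  simp only [map_neg, map_add, map_sub] at h₁ h₂ h₃ h₄
  rw [sub_apply]
  linarith [h₁.1, h₂.2, h₃.2, h₄.1]

theorem norm_sub_rpow_add_norm_add_rpow_le {F : Type*} [NormedAddCommGroup F]
    [InnerProductSpace ℝ F] {p : ℝ} (hp₀ : 0 ≤ p) (hp₂ : p ≤ 2) (k e : F) :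
    ‖k - e‖ ^ p + ‖k + e‖ ^ p ≤ 2 * (‖k‖ ^ 2 + ‖e‖ ^ 2) ^ (p / 2) := by
  have hsq (v : F) : ‖v‖ ^ p = (‖v‖ ^ 2) ^ (p / 2) := by
    rw [← rpow_natCast_mul (norm_nonneg v)]; ring_nf
  have hmid : (1 / 2 : ℝ) • ‖k - e‖ ^ 2 + (1 / 2 : ℝ) • ‖k + e‖ ^ 2 = ‖k‖ ^ 2 + ‖e‖ ^ 2 := by
    simp only [smul_eq_mul]; linarith [parallelogram_law_with_norm ℝ k e]
  have hconc := (concaveOn_rpow (p := p / 2) (by linarith) (by linarith)).2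
    (sq_nonneg ‖k - e‖) (sq_nonneg ‖k + e‖) (show (0 : ℝ) ≤ 1 / 2 by norm_num)
    (show (0 : ℝ) ≤ 1 / 2 by norm_num) (by norm_num)
  rw [hmid, smul_eq_mul, smul_eq_mul] at hconc
  rw [hsq, hsq]
  linarith

theorem div_sqrt_sq_add_sq_rpow {ν s : ℝ} (hν : 0 < ν) (hs : 0 ≤ s) :
    ((s / √ν) ^ 2 + s ^ 2) ^ ((1 + ν) / 2) =
      √(1 + ν) * ((1 + ν) / ν) ^ (ν / 2) * s ^ ν * (s / √ν) := by
  have hB : 0 < (1 + ν) / ν := by positivity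
  have hsplit : (s / √ν) ^ 2 + s ^ 2 = s ^ 2 * ((1 + ν) / ν) := by
    rw [div_pow, sq_sqrt hν.le]; field_simp
  have hs_pow : (s ^ 2) ^ ((1 + ν) / 2) = s ^ ν * s := by
    rw [← rpow_natCast_mul hs, ← rpow_add_one' hs (by linarith)]; ring_nf
  have hB_pow : ((1 + ν) / ν) ^ ((1 + ν) / 2) = ((1 + ν) / ν) ^ (ν / 2) * (√(1 + ν) / √ν) := by
    rw [← sqrt_div' _ hν.le, sqrt_eq_rpow, ← rpow_add hB]; ring_nf
  rw [hsplit, mul_rpow (sq_nonneg s) hB.le, hs_pow, hB_pow]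
  ring

theorem opNorm_le_of_apply_le_mul_sq_add_sq_rpow {F : Type*} [NormedAddCommGroup F]
    [NormedSpace ℝ F] (φ : F →L[ℝ] ℝ) {ν A s : ℝ} (hν : 0 < ν) (hA : 0 ≤ A) (hs : 0 < s)
    (h : ∀ k, φ k ≤ A * (‖k‖ ^ 2 + s ^ 2) ^ ((1 + ν) / 2)) :
    ‖φ‖ ≤ A * √(1 + ν) * ((1 + ν) / ν) ^ (ν / 2) * s ^ ν := by
  set M := A * √(1 + ν) * ((1 + ν) / ν) ^ (ν / 2) * s ^ ν
  have hM : 0 ≤ M := by positivity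
  have hle (k : F) : φ k ≤ M * ‖k‖ := by
    rcases eq_or_ne k 0 with rfl | hk
    · simp
    have hk : 0 < ‖k‖ := norm_pos_iff.2 hk
    -- `‖k‖ = s / √ν` minimises `(‖k‖ ^ 2 + s ^ 2) ^ ((1 + ν) / 2) / ‖k‖`
    set t := s / √ν
    have hc : 0 < t / ‖k‖ := by positivity
    have hscaled := h ((t / ‖k‖) • k)
    rw [map_smul, smul_eq_mul, norm_smul, norm_of_nonneg hc.le, div_mul_cancel₀ _ hk.ne',
      div_sqrt_sq_add_sq_rpow hν hs.le] at hscaled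
    refine le_of_mul_le_mul_left ?_ hc
    calc t / ‖k‖ * φ k ≤ M * t := by linarith
      _ = t / ‖k‖ * (M * ‖k‖) := by field_simp
  refine ContinuousLinearMap.opNorm_le_bound _ hM fun k => abs_le.2 ⟨?_, hle k⟩
  have := hle (-k)
  rw [map_neg, norm_neg] at this
  linarith

theorem approximable_implies_holder_gradient_euclidean_general
    {E : Type*} [NormedAddCommGroup E] [InnerProductSpace ℝ E]
    (ν L : ℝ) (hν0 : 0 < ν) (hν1 : ν ≤ 1) (hL : 0 ≤ L)
    (f : E → ℝ) (f' : E → (E →L[ℝ] ℝ))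
    (happrox : ∀ x y : E, |f y - f x - f' x (y - x)| ≤ L / (1 + ν) * ‖y - x‖ ^ (1 + ν)) :
    ∀ x y : E, ‖f' x - f' y‖ ≤
      2 ^ (1 - ν) / Real.sqrt (1 + ν) * ((1 + ν) / ν) ^ (ν / 2) * L * ‖x - y‖ ^ ν := by
  intro x y
  rcases eq_or_ne x y with rfl | hxy
  · simp [zero_rpow hν0.ne']
  set e : E := (2⁻¹ : ℝ) • (x - y)
  have he : ‖e‖ = ‖x - y‖ / 2 := by simp [e, norm_smul]; ring
  have hbound (k : E) :
      (f' x - f' y) k ≤ 2 * L / (1 + ν) * (‖k‖ ^ 2 + ‖e‖ ^ 2) ^ ((1 + ν) / 2) :=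
    calc (f' x - f' y) k ≤ L / (1 + ν) * ‖k - e‖ ^ (1 + ν) + L / (1 + ν) * ‖k + e‖ ^ (1 + ν) :=
          sub_apply_le_of_abs_taylor_remainder_le f f' (fun t => L / (1 + ν) * t ^ (1 + ν))
            happrox x y k
      _ ≤ L / (1 + ν) * (2 * (‖k‖ ^ 2 + ‖e‖ ^ 2) ^ ((1 + ν) / 2)) := by
          rw [← mul_add]
          gcongr
          exact norm_sub_rpow_add_norm_add_rpow_le (by linarith) (by linarith) k e
      _ = _ := by ring
  have hpos : 0 < ‖x - y‖ := norm_pos_iff.2 (sub_ne_zero.2 hxy)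
  calc ‖f' x - f' y‖ ≤ 2 * L / (1 + ν) * √(1 + ν) * ((1 + ν) / ν) ^ (ν / 2) * ‖e‖ ^ ν :=
        opNorm_le_of_apply_le_mul_sq_add_sq_rpow _ hν0 (by positivity) (by rw [he]; positivity)
          hbound
    _ = _ := by
        have hsqrt : √(1 + ν) ^ 2 = 1 + ν := sq_sqrt (by linarith)
        rw [he, div_rpow hpos.le zero_le_two, rpow_sub zero_lt_two, rpow_one]
        field_simp
        rw [hsqrt]

/-- In a Euclidean (inner product) space, ν-approximability with parameter L implies
ν-Hölder continuity of the gradient with constant `(2^(1-ν)/√(1+ν)) * ((1+ν)/ν)^(ν/2) * L`. -/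
theorem approximable_implies_holder_gradient_euclidean
    {E : Type*} [NormedAddCommGroup E] [InnerProductSpace ℝ E] [FiniteDimensional ℝ E]
    (ν L : ℝ) (hν0 : 0 < ν) (hν1 : ν ≤ 1) (hL : 0 ≤ L)
    (f : E → ℝ) (f' : E → (E →L[ℝ] ℝ))
    (hdiff : ∀ x, HasFDerivAt f (f' x) x)
    (happrox : ∀ x y : E, |f y - f x - f' x (y - x)| ≤ L / (1 + ν) * ‖y - x‖ ^ (1 + ν)) :
    ∀ x y : E, ‖f' x - f' y‖ ≤
      2 ^ (1 - ν) / Real.sqrt (1 + ν) * ((1 + ν) / ν) ^ (ν / 2) * L * ‖x - y‖ ^ ν :=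
  approximable_implies_holder_gradient_euclidean_general ν L hν0 hν1 hL f f' happrox
end

section
/- Let E be a real finite-dimensional normed vector space, let 0 < ν ≤ 1, let L⁻ ≥ 0 and L⁺ ≥ 0, and let f : E → ℝ be differentiable and satisfy, for every x, y ∈ E, the two-sided bound −(L⁻/(1+ν))·‖x − y‖^{1+ν} ≤ f(y) − f(x) − ⟨f'(x), y − x⟩ ≤ (L⁺/(1+ν))·‖y − x‖^{1+ν}. Then f has ν-Hölder continuous gradient with constant 2^{−ν}·((1+ν)/ν)^ν·(L⁻ + L⁺), i.e. ‖f'(x) − f'(y)‖* ≤ 2^{−ν}·((1+ν)/ν)^ν·(L⁻ + L⁺)·‖x − y‖^ν for all x, y ∈ E. -/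
/-!
Suppose the Taylor error `f y - f x - f' x (y - x)` lies between `-A ‖x - y‖ ^ p` and
`B ‖y - x‖ ^ p`, and write `φ = f' x - f' y`. Adding the lower bound at `(x, u)`, `(y, v)` to the
upper bound at `(y, u)`, `(x, v)` bounds `φ (u - v)` by Taylor errors alone. Taking `u`, `v`
symmetric about the midpoint of `x` and `y` with `u - v = h`, all four distances are at most
`(‖x - y‖ + ‖h‖) / 2`; so `|φ|` is at most `2 (A + B) ((‖x - y‖ + s) / 2) ^ p` on the ball of
radius `s`, and it remains to optimise over `s`.
-/

open Real Metric

section TaylorBounds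

variable {E : Type*} [NormedAddCommGroup E] [NormedSpace ℝ E]
  {f : E → ℝ} {f' : E → StrongDual ℝ E} {p A B : ℝ}

lemma norm_inv_two_smul_le {w : E} {c : ℝ} (hw : ‖w‖ ≤ c) : ‖(2⁻¹ : ℝ) • w‖ ≤ c / 2 := by
  rw [norm_smul, norm_inv, Real.norm_two]
  linarith

lemma sub_apply_sub_le_of_taylor_bounds
    (hlower : ∀ x y, -A * ‖x - y‖ ^ p ≤ f y - f x - f' x (y - x))
    (hupper : ∀ x y, f y - f x - f' x (y - x) ≤ B * ‖y - x‖ ^ p) (x y u v : E) :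
    (f' x - f' y) (u - v) ≤
      B * ‖u - y‖ ^ p + A * ‖x - u‖ ^ p + B * ‖v - x‖ ^ p + A * ‖y - v‖ ^ p := by
  have hxu := hlower x u
  have hyu := hupper y u
  have hyv := hlower y v
  have hxv := hupper x v
  simp only [sub_apply, map_sub] at hxu hyu hyv hxv ⊢
  linarith

lemma sub_apply_le_of_taylor_bounds (hA : 0 ≤ A) (hB : 0 ≤ B) (hp : 0 ≤ p)
    (hlower : ∀ x y, -A * ‖x - y‖ ^ p ≤ f y - f x - f' x (y - x))
    (hupper : ∀ x y, f y - f x - f' x (y - x) ≤ B * ‖y - x‖ ^ p) (x y h : E) :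
    (f' x - f' y) h ≤ 2 * (A + B) * ((‖x - y‖ + ‖h‖) / 2) ^ p := by
  set u : E := (2⁻¹ : ℝ) • (x + y + h)
  set v : E := (2⁻¹ : ℝ) • (x + y - h)
  set R := (‖x - y‖ + ‖h‖) / 2
  have huv : u - v = h := by simp only [u, v]; module
  have hyx : ‖y - x‖ = ‖x - y‖ := norm_sub_rev y x
  have hu_y : ‖u - y‖ ≤ R := by
    rw [show u - y = (2⁻¹ : ℝ) • ((x - y) + h) by simp only [u]; module]
    exact norm_inv_two_smul_le (norm_add_le _ _)
  have hx_u : ‖x - u‖ ≤ R := by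
    rw [show x - u = (2⁻¹ : ℝ) • ((x - y) - h) by simp only [u]; module]
    exact norm_inv_two_smul_le (norm_sub_le _ _)
  have hv_x : ‖v - x‖ ≤ R := by
    rw [show v - x = (2⁻¹ : ℝ) • ((y - x) - h) by simp only [v]; module]
    exact norm_inv_two_smul_le ((norm_sub_le _ _).trans_eq (by rw [hyx]))
  have hy_v : ‖y - v‖ ≤ R := by
    rw [show y - v = (2⁻¹ : ℝ) • ((y - x) + h) by simp only [v]; module]
    exact norm_inv_two_smul_le ((norm_add_le _ _).trans_eq (by rw [hyx]))
  calc (f' x - f' y) h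
      ≤ B * ‖u - y‖ ^ p + A * ‖x - u‖ ^ p + B * ‖v - x‖ ^ p + A * ‖y - v‖ ^ p := by
        rw [← huv]; exact sub_apply_sub_le_of_taylor_bounds hlower hupper x y u v
    _ ≤ B * R ^ p + A * R ^ p + B * R ^ p + A * R ^ p := by gcongr
    _ = 2 * (A + B) * R ^ p := by ring

lemma norm_sub_le_of_taylor_bounds (hA : 0 ≤ A) (hB : 0 ≤ B) (hp : 0 ≤ p)
    (hlower : ∀ x y, -A * ‖x - y‖ ^ p ≤ f y - f x - f' x (y - x))
    (hupper : ∀ x y, f y - f x - f' x (y - x) ≤ B * ‖y - x‖ ^ p) (x y : E) {s : ℝ}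
    (hs : 0 < s) :
    ‖f' x - f' y‖ ≤ 2 * (A + B) * ((‖x - y‖ + s) / 2) ^ p / s := by
  refine ContinuousLinearMap.opNorm_bound_of_ball_bound hs _ _ fun h hh => ?_
  rw [mem_closedBall, dist_zero_right] at hh
  have hmono : 2 * (A + B) * ((‖x - y‖ + ‖h‖) / 2) ^ p ≤
      2 * (A + B) * ((‖x - y‖ + s) / 2) ^ p := by gcongr
  have hpos := sub_apply_le_of_taylor_bounds hA hB hp hlower hupper x y h
  have hneg := sub_apply_le_of_taylor_bounds hA hB hp hlower hupper x y (-h)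
  rw [map_neg, norm_neg] at hneg
  rw [Real.norm_eq_abs, abs_le]
  constructor <;> linarith

end TaylorBounds

-- `s = r / ν` minimises `s ↦ ((r + s) / 2) ^ (1 + ν) / s`.
lemma two_mul_div_mul_rpow_div_eq {r ν : ℝ} (hr : 0 < r) (hν : 0 < ν) (K : ℝ) :
    2 * (K / (1 + ν)) * ((r + r / ν) / 2) ^ (1 + ν) / (r / ν) =
      2 ^ (-ν) * ((1 + ν) / ν) ^ ν * K * r ^ ν := by
  have hc : 0 < (1 + ν) / ν := by positivity
  have hmid : (r + r / ν) / 2 = r * ((1 + ν) / ν) * 2⁻¹ := by field_simp; ring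
  rw [hmid, rpow_add (by positivity), rpow_one, mul_rpow (by positivity) (by norm_num),
    mul_rpow hr.le hc.le, inv_rpow zero_le_two, ← rpow_neg zero_le_two]
  field_simp

theorem two_sided_approximable_implies_holder_gradient_general
    {E : Type*} [NormedAddCommGroup E] [NormedSpace ℝ E]
    (ν Lm Lp : ℝ) (hν0 : 0 < ν) (hLm : 0 ≤ Lm) (hLp : 0 ≤ Lp)
    (f : E → ℝ) (f' : E → (E →L[ℝ] ℝ))
    (hlower : ∀ x y : E, -(Lm / (1 + ν)) * ‖x - y‖ ^ (1 + ν) ≤ f y - f x - f' x (y - x))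
    (hupper : ∀ x y : E, f y - f x - f' x (y - x) ≤ Lp / (1 + ν) * ‖y - x‖ ^ (1 + ν)) :
    ∀ x y : E, ‖f' x - f' y‖ ≤ 2 ^ (-ν) * ((1 + ν) / ν) ^ ν * (Lm + Lp) * ‖x - y‖ ^ ν := by
  intro x y
  rcases eq_or_ne x y with rfl | hxy
  · simp [zero_rpow hν0.ne']
  have hr : 0 < ‖x - y‖ := norm_pos_iff.mpr (sub_ne_zero.mpr hxy)
  have hp : 0 ≤ 1 + ν := by linarith
  have hbound := norm_sub_le_of_taylor_bounds (div_nonneg hLm hp) (div_nonneg hLp hp) hp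
    hlower hupper x y (div_pos hr hν0)
  rwa [← add_div, two_mul_div_mul_rpow_div_eq hr hν0] at hbound

/-- A two-sided bound on the error of the first-order Taylor approximation, with
parameters L⁻ and L⁺, implies ν-Hölder continuity of the gradient with constant
`2^(-ν) * ((1+ν)/ν)^ν * (L⁻ + L⁺)`. -/
theorem two_sided_approximable_implies_holder_gradient
    {E : Type*} [NormedAddCommGroup E] [NormedSpace ℝ E] [FiniteDimensional ℝ E]
    (ν Lm Lp : ℝ) (hν0 : 0 < ν) (hν1 : ν ≤ 1) (hLm : 0 ≤ Lm) (hLp : 0 ≤ Lp)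
    (f : E → ℝ) (f' : E → (E →L[ℝ] ℝ))
    (hdiff : ∀ x, HasFDerivAt f (f' x) x)
    (hlower : ∀ x y : E, -(Lm / (1 + ν)) * ‖x - y‖ ^ (1 + ν) ≤ f y - f x - f' x (y - x))
    (hupper : ∀ x y : E, f y - f x - f' x (y - x) ≤ Lp / (1 + ν) * ‖y - x‖ ^ (1 + ν)) :
    ∀ x y : E, ‖f' x - f' y‖ ≤ 2 ^ (-ν) * ((1 + ν) / ν) ^ ν * (Lm + Lp) * ‖x - y‖ ^ ν :=
  two_sided_approximable_implies_holder_gradient_general ν Lm Lp hν0 hLm hLp f f' hlower hupper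
end

section
/- Let E be a real finite-dimensional normed vector space, let 0 < ν ≤ 1, let L ≥ 0, and let f : E → ℝ be differentiable, convex, and ν-approximable with parameter L, i.e. |f(y) − f(x) − ⟨f'(x), y − x⟩| ≤ (L/(1+ν))·‖y − x‖^{1+ν} for all x, y ∈ E. Then f has ν-Hölder continuous gradient with constant 2^{−ν}·((1+ν)/ν)^ν·L, i.e. ‖f'(x) − f'(y)‖* ≤ 2^{−ν}·((1+ν)/ν)^ν·L·‖x − y‖^ν for all x, y ∈ E. -/
/-!
Convexity bounds `f` below by its tangent planes and approximability bounds it above by them up to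
`L/(1+ν) ‖·‖^(1+ν)`. Comparing the two at the points `m ± u` around the midpoint `m` of `x` and `y`
gives `(f' x - f' y) u ≤ L/(1+ν) ‖(x - y)/2 + u‖^(1+ν)` for every `u`; dividing by `‖u‖` and
optimising over `‖u‖` yields the Hölder bound.
-/

open Set

theorem ConvexOn.hasFDerivAt_apply_sub_le {E : Type*} [NormedAddCommGroup E] [NormedSpace ℝ E]
    {s : Set E} {f : E → ℝ} {f' : E →L[ℝ] ℝ} {a b : E}
    (hf : ConvexOn ℝ s f) (ha : a ∈ s) (hb : b ∈ s) (hfa : HasFDerivAt f f' a) :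
    f' (b - a) ≤ f b - f a := by
  set γ : ℝ →ᵃ[ℝ] E := AffineMap.lineMap a b
  have hline : ConvexOn ℝ (γ ⁻¹' s) (f ∘ γ) := hf.comp_affineMap γ
  have hγ0 : γ 0 = a := AffineMap.lineMap_apply_zero a b
  have hγ1 : γ 1 = b := AffineMap.lineMap_apply_one a b
  have hderiv : HasDerivAt (f ∘ γ) (f' (b - a)) 0 :=
    (hγ0 ▸ hfa).comp_hasDerivAt (0 : ℝ) AffineMap.hasDerivAt_lineMap
  have hslope := hline.le_slope_of_hasDerivAt (by simpa [hγ0]) (by simpa [hγ1]) one_pos hderiv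
  simpa [slope_def_field, hγ0, hγ1] using hslope

theorem ConvexOn.sub_apply_le_of_remainder_le {E : Type*} [NormedAddCommGroup E] [NormedSpace ℝ E]
    {f : E → ℝ} {f' : E → E →L[ℝ] ℝ} {φ : ℝ → ℝ}
    (hconv : ConvexOn ℝ univ f) (hdiff : ∀ x, HasFDerivAt f (f' x) x)
    (hupper : ∀ x y, f y - f x - f' x (y - x) ≤ φ ‖y - x‖) (x y u : E) :
    (f' x - f' y) u ≤ φ ‖(2⁻¹ : ℝ) • (x - y) + u‖ := by
  set m : E := (2⁻¹ : ℝ) • (x + y)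
  set v : E := (2⁻¹ : ℝ) • (x - y)
  have lower_x := hconv.hasFDerivAt_apply_sub_le (mem_univ x) (mem_univ (m + u)) (hdiff x)
  have lower_y := hconv.hasFDerivAt_apply_sub_le (mem_univ y) (mem_univ (m - u)) (hdiff y)
  have upper_y := hupper y (m + u)
  have upper_x := hupper x (m - u)
  have hxu : m + u - x = u - v := by simp only [m, v]; module
  have hyu : m + u - y = v + u := by simp only [m, v]; module
  have hxu' : m - u - x = -(v + u) := by simp only [m, v]; module
  have hyu' : m - u - y = v - u := by simp only [m, v]; module
  rw [hxu] at lower_x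
  rw [hyu'] at lower_y
  rw [hyu] at upper_y
  rw [hxu', norm_neg] at upper_x
  simp only [map_sub, map_add, map_neg, sub_apply] at *
  -- in the sum of the four inequalities the values of `f` and the terms in `v` cancel
  linarith

theorem ContinuousLinearMap.apply_le_div_mul_norm {E : Type*} [NormedAddCommGroup E]
    [NormedSpace ℝ E] (ℓ : E →L[ℝ] ℝ) {g : ℝ → ℝ} (h : ∀ u, ℓ u ≤ g ‖u‖) {s : ℝ} (hs : 0 < s)
    (v : E) : ℓ v ≤ g s / s * ‖v‖ := by
  rcases eq_or_ne v 0 with rfl | hv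
  · simp
  have hv' : 0 < ‖v‖ := norm_pos_iff.mpr hv
  have hscaled := h ((s / ‖v‖) • v)
  rw [map_smul, smul_eq_mul, norm_smul, Real.norm_of_nonneg (by positivity),
    div_mul_cancel₀ _ hv'.ne'] at hscaled
  calc ℓ v = ‖v‖ / s * (s / ‖v‖ * ℓ v) := by field_simp
    _ ≤ ‖v‖ / s * g s := by gcongr
    _ = g s / s * ‖v‖ := by ring

theorem ContinuousLinearMap.norm_le_div_of_apply_le {E : Type*} [NormedAddCommGroup E]
    [NormedSpace ℝ E] (ℓ : E →L[ℝ] ℝ) {g : ℝ → ℝ} (h : ∀ u, ℓ u ≤ g ‖u‖) {s : ℝ} (hs : 0 < s)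
    (hgs : 0 ≤ g s) : ‖ℓ‖ ≤ g s / s := by
  refine ℓ.opNorm_le_bound (by positivity) fun v => abs_le.mpr ⟨?_, ℓ.apply_le_div_mul_norm h hs v⟩
  have := ℓ.apply_le_div_mul_norm h hs (-v)
  rw [map_neg, norm_neg] at this
  linarith

theorem holder_constant_eq {ν L r : ℝ} (hν : 0 < ν) (hr : 0 < r) :
    L / (1 + ν) * (r / 2 + r / (2 * ν)) ^ (1 + ν) / (r / (2 * ν)) =
      2 ^ (-ν) * ((1 + ν) / ν) ^ ν * L * r ^ ν := by
  have hsum : r / 2 + r / (2 * ν) = r / 2 * ((1 + ν) / ν) := by field_simp; ring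
  rw [hsum, Real.rpow_add (by positivity), Real.rpow_one,
    Real.mul_rpow (by positivity) (by positivity), Real.div_rpow hr.le zero_le_two,
    Real.rpow_neg zero_le_two]
  field_simp

theorem convex_approximable_implies_holder_gradient_general
    {E : Type*} [NormedAddCommGroup E] [NormedSpace ℝ E]
    (ν L : ℝ) (hν0 : 0 < ν) (hL : 0 ≤ L)
    (f : E → ℝ) (f' : E → (E →L[ℝ] ℝ))
    (hdiff : ∀ x, HasFDerivAt f (f' x) x)
    (hconv : ConvexOn ℝ Set.univ f)
    (happrox : ∀ x y : E, |f y - f x - f' x (y - x)| ≤ L / (1 + ν) * ‖y - x‖ ^ (1 + ν)) :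
    ∀ x y : E, ‖f' x - f' y‖ ≤ 2 ^ (-ν) * ((1 + ν) / ν) ^ ν * L * ‖x - y‖ ^ ν := by
  intro x y
  rcases eq_or_ne x y with rfl | hxy
  · simp [Real.zero_rpow hν0.ne']
  set r := ‖x - y‖
  have hr : 0 < r := norm_pos_iff.mpr (sub_ne_zero.mpr hxy)
  set g : ℝ → ℝ := fun t => L / (1 + ν) * (r / 2 + t) ^ (1 + ν)
  have hupper : ∀ x y, f y - f x - f' x (y - x) ≤ L / (1 + ν) * ‖y - x‖ ^ (1 + ν) :=
    fun x y => (le_abs_self _).trans (happrox x y)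
  have hv : ‖(2⁻¹ : ℝ) • (x - y)‖ = r / 2 := by rw [norm_smul]; norm_num; ring
  have hbound : ∀ u, (f' x - f' y) u ≤ g ‖u‖ := fun u => by
    refine (hconv.sub_apply_le_of_remainder_le (φ := fun t => L / (1 + ν) * t ^ (1 + ν))
      hdiff hupper x y u).trans ?_
    simp only [g]
    gcongr
    exact hv ▸ norm_add_le _ _
  -- `s = r/(2ν)` minimises `g s / s`.
  have hs : 0 < r / (2 * ν) := by positivity
  calc ‖f' x - f' y‖ ≤ g (r / (2 * ν)) / (r / (2 * ν)) :=
        (f' x - f' y).norm_le_div_of_apply_le hbound hs (by positivity)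
    _ = _ := holder_constant_eq hν0 hr

/-- For a convex ν-approximable function with parameter L, the gradient is ν-Hölder
continuous with constant `2^(-ν) * ((1+ν)/ν)^ν * L`. -/
theorem convex_approximable_implies_holder_gradient
    {E : Type*} [NormedAddCommGroup E] [NormedSpace ℝ E] [FiniteDimensional ℝ E]
    (ν L : ℝ) (hν0 : 0 < ν) (hν1 : ν ≤ 1) (hL : 0 ≤ L)
    (f : E → ℝ) (f' : E → (E →L[ℝ] ℝ))
    (hdiff : ∀ x, HasFDerivAt f (f' x) x)
    (hconv : ConvexOn ℝ Set.univ f)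
    (happrox : ∀ x y : E, |f y - f x - f' x (y - x)| ≤ L / (1 + ν) * ‖y - x‖ ^ (1 + ν)) :
    ∀ x y : E, ‖f' x - f' y‖ ≤ 2 ^ (-ν) * ((1 + ν) / ν) ^ ν * L * ‖x - y‖ ^ ν :=
  convex_approximable_implies_holder_gradient_general ν L hν0 hL f f' hdiff hconv happrox
end

section
/- Let E be a real finite-dimensional normed vector space, let L ≥ 0, and let f : E → ℝ be differentiable and satisfy |f(y) − f(x) − ⟨f'(x), y − x⟩| ≤ (L/2)·‖y − x‖² for all x, y ∈ E. Then the gradient of f is Lipschitz continuous with constant 2L, i.e. ‖f'(x) − f'(y)‖* ≤ 2L·‖x − y‖ for all x, y ∈ E. -/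
/-- 1-approximability with parameter L implies Lipschitz continuity of the gradient
with constant 2L. -/
theorem one_approximable_implies_lipschitz_gradient
    {E : Type*} [NormedAddCommGroup E] [NormedSpace ℝ E] [FiniteDimensional ℝ E]
    (L : ℝ) (hL : 0 ≤ L)
    (f : E → ℝ) (f' : E → (E →L[ℝ] ℝ))
    (hdiff : ∀ x, HasFDerivAt f (f' x) x)
    (happrox : ∀ x y : E, |f y - f x - f' x (y - x)| ≤ L / 2 * ‖y - x‖ ^ 2) :
    ∀ x y : E, ‖f' x - f' y‖ ≤ 2 * L * ‖x - y‖ := by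
  intro x y
  rcases eq_or_ne x y with rfl | hxy
  · simp
  have hd0 : 0 < ‖x - y‖ := norm_pos_iff.mpr (sub_ne_zero.mpr hxy)
  set d : ℝ := ‖x - y‖ with hd
  apply ContinuousLinearMap.opNorm_le_bound _ (by positivity)
  intro h
  rcases eq_or_ne h 0 with rfl | hh
  · simp
  have hhn : 0 < ‖h‖ := norm_pos_iff.mpr hh
  set c : ℝ := d / ‖h‖ with hc
  have hcpos : 0 < c := div_pos hd0 hhn
  set u : E := c • h with hu
  have hun : ‖u‖ = d := by
    rw [hu, norm_smul, Real.norm_eq_abs, abs_of_pos hcpos, hc,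
      div_mul_cancel₀ _ (ne_of_gt hhn)]
  set m : E := (2⁻¹ : ℝ) • (x + y) with hm
  set z : E := m - (2⁻¹ : ℝ) • u with hz
  set z' : E := m + (2⁻¹ : ℝ) • u with hz'
  have hzz : z' - z = u := by rw [hz, hz']; module
  -- norms of the four displacements
  have hzx : ‖z - x‖ ≤ d := by
    have : z - x = (2⁻¹ : ℝ) • (y - x) - (2⁻¹ : ℝ) • u := by rw [hz, hm]; module
    rw [this]
    calc ‖(2⁻¹ : ℝ) • (y - x) - (2⁻¹ : ℝ) • u‖
        ≤ ‖(2⁻¹ : ℝ) • (y - x)‖ + ‖(2⁻¹ : ℝ) • u‖ := norm_sub_le _ _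
      _ = 2⁻¹ * ‖y - x‖ + 2⁻¹ * ‖u‖ := by
          simp [norm_smul]
      _ = d := by rw [hun, norm_sub_rev]; ring
  have hzy : ‖z - y‖ ≤ d := by
    have : z - y = (2⁻¹ : ℝ) • (x - y) - (2⁻¹ : ℝ) • u := by rw [hz, hm]; module
    rw [this]
    calc ‖(2⁻¹ : ℝ) • (x - y) - (2⁻¹ : ℝ) • u‖
        ≤ ‖(2⁻¹ : ℝ) • (x - y)‖ + ‖(2⁻¹ : ℝ) • u‖ := norm_sub_le _ _
      _ = 2⁻¹ * ‖x - y‖ + 2⁻¹ * ‖u‖ := by simp [norm_smul]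
      _ = d := by rw [hun]; ring
  have hzx' : ‖z' - x‖ ≤ d := by
    have : z' - x = (2⁻¹ : ℝ) • (y - x) + (2⁻¹ : ℝ) • u := by rw [hz', hm]; module
    rw [this]
    calc ‖(2⁻¹ : ℝ) • (y - x) + (2⁻¹ : ℝ) • u‖
        ≤ ‖(2⁻¹ : ℝ) • (y - x)‖ + ‖(2⁻¹ : ℝ) • u‖ := norm_add_le _ _
      _ = 2⁻¹ * ‖y - x‖ + 2⁻¹ * ‖u‖ := by simp [norm_smul]
      _ = d := by rw [hun, norm_sub_rev]; ring
  have hzy' : ‖z' - y‖ ≤ d := by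
    have : z' - y = (2⁻¹ : ℝ) • (x - y) + (2⁻¹ : ℝ) • u := by rw [hz', hm]; module
    rw [this]
    calc ‖(2⁻¹ : ℝ) • (x - y) + (2⁻¹ : ℝ) • u‖
        ≤ ‖(2⁻¹ : ℝ) • (x - y)‖ + ‖(2⁻¹ : ℝ) • u‖ := norm_add_le _ _
      _ = 2⁻¹ * ‖x - y‖ + 2⁻¹ * ‖u‖ := by simp [norm_smul]
      _ = d := by rw [hun]; ring
  -- key algebraic identity
  have hfx : f' x u = f' x (z' - x) - f' x (z - x) := by
    rw [← map_sub]; congr 1; rw [← hzz]; abel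
  have hfy : f' y u = f' y (z' - y) - f' y (z - y) := by
    rw [← map_sub]; congr 1; rw [← hzz]; abel
  have key : (f' x - f' y) u =
      ((f z - f x - f' x (z - x)) - (f z - f y - f' y (z - y)))
      - ((f z' - f x - f' x (z' - x)) - (f z' - f y - f' y (z' - y))) := by
    simp only [ContinuousLinearMap.sub_apply]
    rw [hfx, hfy]; ring
  -- bound each term
  have sq_le : ∀ a : ℝ, a ≤ d → 0 ≤ a → L / 2 * a ^ 2 ≤ L / 2 * d ^ 2 := by
    intro a ha ha0
    have := pow_le_pow_left₀ ha0 ha 2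
    nlinarith
  have b1 := (happrox x z).trans (sq_le _ hzx (norm_nonneg _))
  have b2 := (happrox y z).trans (sq_le _ hzy (norm_nonneg _))
  have b3 := (happrox x z').trans (sq_le _ hzx' (norm_nonneg _))
  have b4 := (happrox y z').trans (sq_le _ hzy' (norm_nonneg _))
  have hbound : |(f' x - f' y) u| ≤ 2 * L * d ^ 2 := by
    rw [key]
    calc |((f z - f x - f' x (z - x)) - (f z - f y - f' y (z - y)))
          - ((f z' - f x - f' x (z' - x)) - (f z' - f y - f' y (z' - y)))|
        ≤ |f z - f x - f' x (z - x)| + |f z - f y - f' y (z - y)|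
          + |f z' - f x - f' x (z' - x)| + |f z' - f y - f' y (z' - y)| := by
          have := abs_sub (f z - f x - f' x (z - x) - (f z - f y - f' y (z - y)))
            (f z' - f x - f' x (z' - x) - (f z' - f y - f' y (z' - y)))
          have h1 := abs_sub (f z - f x - f' x (z - x)) (f z - f y - f' y (z - y))
          have h2 := abs_sub (f z' - f x - f' x (z' - x)) (f z' - f y - f' y (z' - y))
          linarith
      _ ≤ L / 2 * d ^ 2 + L / 2 * d ^ 2 + L / 2 * d ^ 2 + L / 2 * d ^ 2 := by
          linarith
      _ = 2 * L * d ^ 2 := by ring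
  -- conclude
  have hcu : (f' x - f' y) u = c * (f' x - f' y) h := by
    rw [hu, map_smul]; simp
  rw [hcu, abs_mul, abs_of_pos hcpos, hc] at hbound
  have : |(f' x - f' y) h| ≤ 2 * L * d * ‖h‖ := by
    have h2 : d * |(f' x - f' y) h| ≤ 2 * L * d ^ 2 * ‖h‖ := by
      rw [div_mul_eq_mul_div, div_le_iff₀ hhn] at hbound
      nlinarith
    have e : 2 * L * d ^ 2 * ‖h‖ = d * (2 * L * d * ‖h‖) := by ring
    exact le_of_mul_le_mul_left (h2.trans_eq e) hd0
  calc ‖(f' x - f' y) h‖ = |(f' x - f' y) h| := Real.norm_eq_abs _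
    _ ≤ 2 * L * d * ‖h‖ := this
end

section
/- Let E be a real finite-dimensional inner product space with norm induced by the inner product, let L ≥ 0, and let f : E → ℝ be differentiable and satisfy |f(y) − f(x) − ⟨f'(x), y − x⟩| ≤ (L/2)·‖y − x‖² for all x, y ∈ E. Then the gradient of f is Lipschitz continuous with constant L, i.e. ‖f'(x) − f'(y)‖* ≤ L·‖x − y‖ for all x, y ∈ E. -/
/-- In a Euclidean (inner product) space, 1-approximability with parameter L implies
Lipschitz continuity of the gradient with the same constant L. -/
theorem one_approximable_implies_lipschitz_gradient_euclidean
    {E : Type*} [NormedAddCommGroup E] [InnerProductSpace ℝ E] [FiniteDimensional ℝ E]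
    (L : ℝ) (hL : 0 ≤ L)
    (f : E → ℝ) (f' : E → (E →L[ℝ] ℝ))
    (hdiff : ∀ x, HasFDerivAt f (f' x) x)
    (happrox : ∀ x y : E, |f y - f x - f' x (y - x)| ≤ L / 2 * ‖y - x‖ ^ 2) :
    ∀ x y : E, ‖f' x - f' y‖ ≤ L * ‖x - y‖ := by
  intro x y
  have key : ∀ u w : E, (f' x - f' y) (u - w) ≤
      L / 2 * (‖u - x‖ ^ 2 + ‖u - y‖ ^ 2 + ‖w - x‖ ^ 2 + ‖w - y‖ ^ 2) := by
    intro u w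
    have A := abs_le.1 (happrox x u)
    have B := abs_le.1 (happrox y u)
    have C := abs_le.1 (happrox x w)
    have D := abs_le.1 (happrox y w)
    simp only [map_sub, ContinuousLinearMap.sub_apply] at *
    linarith [A.1, A.2, B.1, B.2, C.1, C.2, D.1, D.2]
  have hbound : ∀ h : E, (f' x - f' y) h ≤ L * ‖x - y‖ * ‖h‖ := by
    intro h
    rcases eq_or_ne x y with rfl | hxy
    · simp
    rcases eq_or_ne h 0 with rfl | hh
    · simp
    have ht : (0:ℝ) < ‖x - y‖ / 2 := by
      have : (0:ℝ) < ‖x - y‖ := norm_sub_pos_iff.2 hxy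
      linarith
    set t : ℝ := ‖x - y‖ / 2 with ht_def
    have hhn : (0:ℝ) < ‖h‖ := norm_pos_iff.2 hh
    set s : ℝ := t / ‖h‖ with hs_def
    have hs : 0 < s := div_pos ht hhn
    set d : E := (2:ℝ)⁻¹ • (y - x) with hd_def
    set m : E := x + d with hm_def
    have e1 : m + s • h - x = d + s • h := by rw [hm_def]; abel
    have e2 : m + s • h - y = s • h - d := by
      rw [hm_def, hd_def]; module
    have e3 : m - s • h - x = d - s • h := by rw [hm_def]; abel
    have e4 : m - s • h - y = -(d + s • h) := by
      rw [hm_def, hd_def]; module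
    have e5 : m + s • h - (m - s • h) = (2 * s) • h := by module
    have hK := key (m + s • h) (m - s • h)
    rw [e1, e2, e3, e4, e5, norm_neg, norm_sub_rev (s • h) d] at hK
    have hnd : ‖d‖ = t := by
      rw [hd_def, norm_smul, norm_sub_rev]
      simp [ht_def]
      ring
    have hnsh : ‖s • h‖ = t := by
      rw [norm_smul, Real.norm_eq_abs, abs_of_pos hs, hs_def]
      field_simp
    have hpar : ‖d + s • h‖ ^ 2 + ‖d - s • h‖ ^ 2 = 4 * t ^ 2 := by
      have h1 := norm_add_sq_real d (s • h)
      have h2 := norm_sub_sq_real d (s • h)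
      rw [hnd] at h1 h2
      rw [hnsh] at h1 h2
      nlinarith [h1, h2]
    have hmap : (f' x - f' y) ((2 * s) • h) = (2 * s) * (f' x - f' y) h := by
      rw [map_smul, smul_eq_mul]
    rw [hmap] at hK
    have hst : s * ‖h‖ = t := by
      rw [hs_def]; field_simp
    have hxy2 : ‖x - y‖ = 2 * t := by rw [ht_def]; ring
    rw [hxy2]
    have hst2 : 2 * L * t * (s * ‖h‖) = 2 * L * t * t := by rw [hst]
    nlinarith [hK, hpar, hs, hst2, mul_pos hs hhn]
  refine ContinuousLinearMap.opNorm_le_bound _ (by positivity) fun h => ?_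
  rw [Real.norm_eq_abs, abs_le]
  constructor
  · have := hbound (-h)
    rw [map_neg, norm_neg] at this
    linarith
  · exact hbound h
end

section
/- Let E be a real finite-dimensional normed vector space, let L ≥ 0, and let f : E → ℝ be differentiable, convex, and satisfy |f(y) − f(x) − ⟨f'(x), y − x⟩| ≤ (L/2)·‖y − x‖² for all x, y ∈ E. Then the gradient of f is Lipschitz continuous with constant L, i.e. ‖f'(x) − f'(y)‖* ≤ L·‖x − y‖ for all x, y ∈ E. -/
/-!
Convexity gives the lower bound `f x + f' x (z - x) ≤ f z` and the approximation hypothesis the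
upper bound `f z ≤ f x + f' x (z - x) + L/2 ‖z - x‖²`. Sandwiching `f (y + v)` and `f (x - v)`
between these bounds and adding the four inequalities yields
`2 (f' x - f' y) v ≤ (f' x - f' y) (x - y) + L ‖v‖²` for every `v`; taking `v = x - y` and then
`v = ±‖x - y‖ u` with `‖u‖ = 1` bounds `(f' x - f' y) u` by `L ‖x - y‖`.
-/

open Set AffineMap

theorem ConvexOn.add_apply_sub_le_of_hasFDerivAt {E : Type*} [NormedAddCommGroup E]
    [NormedSpace ℝ E] {s : Set E} {f : E → ℝ} {f' : E →L[ℝ] ℝ} {x : E}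
    (hf : ConvexOn ℝ s f) (hx : x ∈ s) (hf' : HasFDerivAt f f' x) {z : E} (hz : z ∈ s) :
    f x + f' (z - x) ≤ f z := by
  set g : ℝ →ᵃ[ℝ] E := lineMap x z
  have hg₀ : g 0 = x := lineMap_apply_zero x z
  have hg₁ : g 1 = z := lineMap_apply_one x z
  have hline : ConvexOn ℝ (g ⁻¹' s) (f ∘ g) := hf.comp_affineMap g
  have hderiv : HasDerivAt (f ∘ g) (f' (z - x)) 0 :=
    (hg₀ ▸ hf').comp_hasDerivAt 0 hasDerivAt_lineMap
  have hslope := hline.le_slope_of_hasDerivAt (by simpa [hg₀] using hx) (by simpa [hg₁] using hz)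
    one_pos hderiv
  rw [slope_def_field, Function.comp_apply, Function.comp_apply, hg₀, hg₁, sub_zero, div_one]
    at hslope
  linarith

theorem two_mul_sub_apply_le {E : Type*} [NormedAddCommGroup E] [NormedSpace ℝ E]
    {f : E → ℝ} {f' : E → (E →L[ℝ] ℝ)} {L : ℝ}
    (hlower : ∀ x z, f x + f' x (z - x) ≤ f z)
    (hupper : ∀ x z, f z ≤ f x + f' x (z - x) + L / 2 * ‖z - x‖ ^ 2) (x y v : E) :
    2 * (f' x - f' y) v ≤ (f' x - f' y) (x - y) + L * ‖v‖ ^ 2 := by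
  have h₁ := hlower x (y + v)
  have h₂ := hupper y (y + v)
  have h₃ := hlower y (x - v)
  have h₄ := hupper x (x - v)
  simp only [add_sub_cancel_left, sub_sub_cancel_left, norm_neg, map_add, map_sub, map_neg,
    sub_apply] at h₁ h₂ h₃ h₄ ⊢
  linarith

theorem ContinuousLinearMap.norm_le_of_two_mul_apply_le {E : Type*} [NormedAddCommGroup E]
    [NormedSpace ℝ E] (φ : E →L[ℝ] ℝ) {w : E} (hw : w ≠ 0) {L : ℝ} (hL : 0 ≤ L)
    (h : ∀ v, 2 * φ v ≤ φ w + L * ‖v‖ ^ 2) : ‖φ‖ ≤ L * ‖w‖ := by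
  have hw' : 0 < ‖w‖ := norm_pos_iff.2 hw
  have hφw : φ w ≤ L * ‖w‖ ^ 2 := by linarith [h w]
  refine opNorm_le_of_unit_norm (by positivity) fun u hu => ?_
  have hpos := h (‖w‖ • u)
  have hneg := h (-(‖w‖ • u))
  simp only [map_neg, map_smul, smul_eq_mul, norm_neg, norm_smul, norm_norm, hu, mul_one]
    at hpos hneg
  rw [Real.norm_eq_abs, abs_le]
  constructor <;> nlinarith

theorem convex_one_approximable_implies_lipschitz_gradient_general
    {E : Type*} [NormedAddCommGroup E] [NormedSpace ℝ E]
    (L : ℝ) (hL : 0 ≤ L)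
    (f : E → ℝ) (f' : E → (E →L[ℝ] ℝ))
    (hdiff : ∀ x, HasFDerivAt f (f' x) x)
    (hconv : ConvexOn ℝ Set.univ f)
    (happrox : ∀ x y : E, |f y - f x - f' x (y - x)| ≤ L / 2 * ‖y - x‖ ^ 2) :
    ∀ x y : E, ‖f' x - f' y‖ ≤ L * ‖x - y‖ := by
  intro x y
  rcases eq_or_ne x y with rfl | hxy
  · simp
  have hlower : ∀ x z, f x + f' x (z - x) ≤ f z := fun x z =>
    hconv.add_apply_sub_le_of_hasFDerivAt (mem_univ x) (hdiff x) (mem_univ z)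
  have hupper : ∀ x z, f z ≤ f x + f' x (z - x) + L / 2 * ‖z - x‖ ^ 2 := fun x z => by
    linarith [le_abs_self (f z - f x - f' x (z - x)), happrox x z]
  exact (f' x - f' y).norm_le_of_two_mul_apply_le (sub_ne_zero.2 hxy) hL
    (two_mul_sub_apply_le hlower hupper x y)

/-- For a convex function, 1-approximability with parameter L implies Lipschitz
continuity of the gradient with the same constant L. -/
theorem convex_one_approximable_implies_lipschitz_gradient
    {E : Type*} [NormedAddCommGroup E] [NormedSpace ℝ E] [FiniteDimensional ℝ E]
    (L : ℝ) (hL : 0 ≤ L)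
    (f : E → ℝ) (f' : E → (E →L[ℝ] ℝ))
    (hdiff : ∀ x, HasFDerivAt f (f' x) x)
    (hconv : ConvexOn ℝ Set.univ f)
    (happrox : ∀ x y : E, |f y - f x - f' x (y - x)| ≤ L / 2 * ‖y - x‖ ^ 2) :
    ∀ x y : E, ‖f' x - f' y‖ ≤ L * ‖x - y‖ :=
  convex_one_approximable_implies_lipschitz_gradient_general L hL f f' hdiff hconv happrox
end

section
/- Let E = ℝ² be equipped with the supremum norm ‖x‖ = max{|x⁽¹⁾|, |x⁽²⁾|}, and let f : ℝ² → ℝ be defined by f(x) = (x⁽¹⁾)² − (x⁽²⁾)². Then for x = (1,1) and y = (0,0) one has ‖x − y‖ = 1 and ‖f'(x) − f'(y)‖* ≥ 4, where ‖·‖* is the dual norm of the supremum norm. Consequently, the Lipschitz constant of the gradient of f satisfies M_f ≥ 4, while f is 1-approximable with parameter 2, so the best 1-approximation parameter of f equals half the Lipschitz constant of its gradient. -/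
/-!
Write `Δ = x - y`. The functional `f'(x) - f'(y)` is `h ↦ 2 Δ₀ h₀ - 2 Δ₁ h₁`, and the dual of the
sup norm is the `ℓ¹` norm of the coefficients, so `‖f'(x) - f'(y)‖* = 2 (|Δ₀| + |Δ₁|) ≤ 4 ‖Δ‖`,
with equality at `Δ = (1, 1)`: the gradient's Lipschitz constant is `4`. Since `f` is quadratic,
the first-order Taylor remainder at `x` in direction `y - x` is `f (y - x)`, and
`|h₀² - h₁²| ≤ ‖h‖²` because the two squares cancel rather than add, with equality at
`h = (1, 0)`: the best approximation parameter is `2`.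
-/

open ContinuousLinearMap

theorem abs_sign_le_one {α : Type*} [Ring α] [LinearOrder α] [IsStrictOrderedRing α] (x : α) :
    |(SignType.sign x : α)| ≤ 1 := by
  rcases lt_trichotomy x 0 with hx | rfl | hx <;> simp [*]

theorem norm_sum_smul_proj {ι : Type*} [Fintype ι] (c : ι → ℝ) :
    ‖∑ i, c i • (proj i : (ι → ℝ) →L[ℝ] ℝ)‖ = ∑ i, |c i| := by
  set φ := ∑ i, c i • (proj i : (ι → ℝ) →L[ℝ] ℝ)
  have hφ (h : ι → ℝ) : φ h = ∑ i, c i * h i := by simp [φ]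
  apply le_antisymm
  · refine opNorm_le_bound _ (by positivity) fun h => ?_
    calc ‖φ h‖ = |∑ i, c i * h i| := by rw [hφ, Real.norm_eq_abs]
      _ ≤ ∑ i, |c i| * ‖h‖ := by
        refine (Finset.abs_sum_le_sum_abs _ _).trans (Finset.sum_le_sum fun i _ => ?_)
        rw [abs_mul]
        exact mul_le_mul_of_nonneg_left (norm_le_pi_norm h i) (abs_nonneg _)
      _ = (∑ i, |c i|) * ‖h‖ := (Finset.sum_mul _ _ _).symm
  · -- the bound is attained at the sign vector of `c`
    have hs : ‖fun i => (SignType.sign (c i) : ℝ)‖ ≤ 1 :=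
      pi_norm_le_iff_of_nonneg zero_le_one |>.mpr fun i => abs_sign_le_one (c i)
    simpa [hφ, Finset.abs_sum_of_nonneg] using φ.unit_le_opNorm _ hs

theorem norm_smul_proj_zero_sub_smul_proj_one (a b : ℝ) :
    ‖a • (proj 0 : (Fin 2 → ℝ) →L[ℝ] ℝ) - b • proj 1‖ = |a| + |b| := by
  convert norm_sum_smul_proj ![a, -b] using 2
  · ext h
    simp [Fin.sum_univ_two, sub_eq_add_neg]
  · simp [Fin.sum_univ_two]

theorem abs_sq_apply_sub_sq_apply_le_norm_sq {ι : Type*} [Fintype ι] (h : ι → ℝ) (i j : ι) :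
    |h i ^ 2 - h j ^ 2| ≤ ‖h‖ ^ 2 := by
  have hi : h i ^ 2 ≤ ‖h‖ ^ 2 := sq_le_sq.mpr (by simpa using norm_le_pi_norm h i)
  have hj : h j ^ 2 ≤ ‖h‖ ^ 2 := sq_le_sq.mpr (by simpa using norm_le_pi_norm h j)
  exact abs_sub_le_of_nonneg_of_le (sq_nonneg _) hi (sq_nonneg _) hj

section SqSubSq

local notation "q" => fun x : Fin 2 → ℝ => x 0 ^ 2 - x 1 ^ 2

theorem hasFDerivAt_sq_sub_sq (x : Fin 2 → ℝ) :
    HasFDerivAt q ((2 * x 0) • (proj 0 : (Fin 2 → ℝ) →L[ℝ] ℝ) - (2 * x 1) • proj 1) x := by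
  have hproj (i : Fin 2) :
      HasFDerivAt (fun x : Fin 2 → ℝ => x i) (proj i : (Fin 2 → ℝ) →L[ℝ] ℝ) x :=
    (proj (R := ℝ) (φ := fun _ : Fin 2 => ℝ) i).hasFDerivAt
  exact ((hproj 0).pow 2).sub ((hproj 1).pow 2) |>.congr_fderiv (by ext h; simp)

theorem fderiv_sq_sub_sq_sub (x y : Fin 2 → ℝ) :
    fderiv ℝ q x - fderiv ℝ q y =
      (2 * (x 0 - y 0)) • (proj 0 : (Fin 2 → ℝ) →L[ℝ] ℝ) - (2 * (x 1 - y 1)) • proj 1 := by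
  rw [(hasFDerivAt_sq_sub_sq x).fderiv, (hasFDerivAt_sq_sub_sq y).fderiv]
  module

theorem norm_fderiv_sq_sub_sq_sub (x y : Fin 2 → ℝ) :
    ‖fderiv ℝ q x - fderiv ℝ q y‖ = 2 * (|x 0 - y 0| + |x 1 - y 1|) := by
  rw [fderiv_sq_sub_sq_sub, norm_smul_proj_zero_sub_smul_proj_one, abs_mul, abs_mul, abs_two]
  ring

theorem sq_sub_sq_sub_sub_fderiv (x y : Fin 2 → ℝ) :
    q y - q x - fderiv ℝ q x (y - x) = (y - x) 0 ^ 2 - (y - x) 1 ^ 2 := by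
  simp only [(hasFDerivAt_sq_sub_sq x).fderiv, sub_apply, smul_apply, proj_apply, smul_eq_mul,
    Pi.sub_apply]
  ring

theorem isLeast_fderiv_sq_sub_sq_lipschitz :
    IsLeast {M : ℝ | 0 ≤ M ∧ ∀ x y : Fin 2 → ℝ, ‖fderiv ℝ q x - fderiv ℝ q y‖ ≤ M * ‖x - y‖} 4 := by
  refine ⟨⟨by norm_num, fun x y => ?_⟩, fun M ⟨_, hM⟩ => ?_⟩
  · have h0 := norm_le_pi_norm (x - y) 0
    have h1 := norm_le_pi_norm (x - y) 1
    simp only [Pi.sub_apply, Real.norm_eq_abs] at h0 h1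
    rw [norm_fderiv_sq_sub_sq_sub]
    linarith
  · have := hM ![1, 1] ![0, 0]
    norm_num [norm_fderiv_sq_sub_sq_sub, Pi.norm_def, Fin.univ_succ] at this
    exact this

theorem isLeast_sq_sub_sq_approx :
    IsLeast {L : ℝ | 0 ≤ L ∧ ∀ x y : Fin 2 → ℝ,
      |q y - q x - fderiv ℝ q x (y - x)| ≤ L / 2 * ‖y - x‖ ^ 2} 2 := by
  refine ⟨⟨by norm_num, fun x y => ?_⟩, fun L ⟨_, hL⟩ => ?_⟩
  · rw [sq_sub_sq_sub_sub_fderiv, div_self two_ne_zero, one_mul]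
    exact abs_sq_apply_sub_sq_apply_le_norm_sq (y - x) 0 1
  · have := hL 0 ![1, 0]
    rw [sq_sub_sq_sub_sub_fderiv] at this
    simp [Pi.norm_def, Fin.univ_succ] at this
    linarith

end SqSubSq

/-- On ℝ² with the supremum norm, for `f x = x₁² − x₂²`, taking x = (1,1) and y = (0,0)
one has ‖x − y‖ = 1 and ‖f'(x) − f'(y)‖* ≥ 4; consequently the Lipschitz constant M_f of
the gradient satisfies M_f ≥ 4, f is 1-approximable with parameter 2, and the best
1-approximation parameter L_f equals half the Lipschitz constant M_f. -/
theorem sup_norm_example_gap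
    (f : (Fin 2 → ℝ) → ℝ) (hf : f = fun x => x 0 ^ 2 - x 1 ^ 2) :
    ‖(![1, 1] : Fin 2 → ℝ) - ![0, 0]‖ = 1 ∧
    ‖fderiv ℝ f ![1, 1] - fderiv ℝ f ![0, 0]‖ ≥ 4 ∧
    (4 ≤ sInf {M : ℝ | 0 ≤ M ∧
        ∀ x y : Fin 2 → ℝ, ‖fderiv ℝ f x - fderiv ℝ f y‖ ≤ M * ‖x - y‖}) ∧
    (∀ x y : Fin 2 → ℝ, |f y - f x - fderiv ℝ f x (y - x)| ≤ 2 / 2 * ‖y - x‖ ^ 2) ∧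
    sInf {L : ℝ | 0 ≤ L ∧
        ∀ x y : Fin 2 → ℝ, |f y - f x - fderiv ℝ f x (y - x)| ≤ L / 2 * ‖y - x‖ ^ 2} =
      sInf {M : ℝ | 0 ≤ M ∧
        ∀ x y : Fin 2 → ℝ, ‖fderiv ℝ f x - fderiv ℝ f y‖ ≤ M * ‖x - y‖} / 2 := by
  subst hf
  have hM := isLeast_fderiv_sq_sub_sq_lipschitz
  have hL := isLeast_sq_sub_sq_approx
  refine ⟨by simp [Pi.norm_def, Fin.univ_succ], ?_, hM.csInf_eq.ge, hL.1.2, ?_⟩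
  · norm_num [norm_fderiv_sq_sub_sq_sub]
  · rw [hL.csInf_eq, hM.csInf_eq]
    norm_num
end

section
/- Let n ≥ 1 and work in ℝⁿ with the canonical Euclidean norm ‖·‖₂, with closed unit ball 𝔹ⁿ and unit sphere 𝕊ⁿ⁻¹. Let K ⊆ 𝔹ⁿ be a compact convex set, symmetric with respect to the origin (K = −K), with nonempty interior, containing n linearly independent vectors lying on 𝕊ⁿ⁻¹, and with K ≠ 𝔹ⁿ. Then there exist u, v ∈ 𝕊ⁿ⁻¹ ∩ K, not colinear, such that (u + v)/‖u + v‖₂ ∉ K. -/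
open Metric Set Submodule

/-!
If every normalized sum of two independent unit vectors of `K` stayed in `K`, then `K` would
contain, together with two independent unit vectors, the whole short great-circle arc joining
them: the parameters of the arc whose point lies in `K` form a closed set of `[0, 1]` that
contains the endpoints and leaves no gap, since the normalized sum of two points of the arc is a
point of the arc strictly between them. With the symmetry of `K`, the vectors whose direction
lies in `K` therefore form a subspace; it contains `n` independent unit vectors, so `K` contains
the unit sphere, and by convexity the whole ball.
-/

theorem Icc_subset_of_isClosed_of_exists_between {α : Type*} [ConditionallyCompleteLinearOrder α]
    [TopologicalSpace α] [OrderTopology α] {A : Set α} {a b : α} (hA : IsClosed A)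
    (ha : a ∈ A) (hb : b ∈ A) (hgap : ∀ x ∈ A, ∀ y ∈ A, x < y → ∃ z ∈ A, x < z ∧ z < y) :
    Icc a b ⊆ A := by
  intro x hx
  by_contra hxA
  have hbelow : BddAbove (A ∩ Iic x) := ⟨x, fun y hy => hy.2⟩
  have habove : BddBelow (A ∩ Ici x) := ⟨x, fun y hy => hy.2⟩
  obtain ⟨hlA, hlx⟩ := (hA.inter isClosed_Iic).csSup_mem ⟨a, ha, hx.1⟩ hbelow
  obtain ⟨huA, hxu⟩ := (hA.inter isClosed_Ici).csInf_mem ⟨b, hb, hx.2⟩ habove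
  have hlx' := lt_of_le_of_ne hlx fun h => hxA (h ▸ hlA)
  have hxu' := lt_of_le_of_ne hxu fun h => hxA (h ▸ huA)
  obtain ⟨z, hzA, hlz, hzu⟩ := hgap _ hlA _ huA (hlx'.trans hxu')
  rcases le_total z x with hzx | hxz
  · exact hlz.not_ge (le_csSup hbelow ⟨hzA, hzx⟩)
  · exact hzu.not_ge (csInf_le habove ⟨hzA, hxz⟩)

theorem LinearIndependent.not_exists_eq_smul {R M : Type*} [Ring R] [Nontrivial R]
    [AddCommGroup M] [Module R M] {u v : M} (h : LinearIndependent R ![u, v]) :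
    ¬ ∃ c : R, u = c • v ∨ v = c • u := by
  rintro ⟨c, rfl | rfl⟩
  · exact one_ne_zero (LinearIndependent.pair_iff.1 h 1 (-c) (by simp)).1
  · exact neg_ne_zero.2 one_ne_zero (LinearIndependent.pair_iff.1 h c (-1) (by simp)).2

variable {E : Type*} [NormedAddCommGroup E] [NormedSpace ℝ E]

theorem inv_norm_smul_smul_of_pos {c : ℝ} (hc : 0 < c) (x : E) :
    ‖c • x‖⁻¹ • (c • x) = ‖x‖⁻¹ • x := by
  rw [norm_smul, Real.norm_of_nonneg hc.le, smul_smul, mul_inv_rev, mul_assoc,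
    inv_mul_cancel₀ hc.ne', mul_one]

theorem exists_mem_Ioo_smul_one_sub_smul_add_smul_eq (y z : E) {a b α β : ℝ} (hab : a < b)
    (hα : 0 < α) (hβ : 0 < β) : ∃ ν ∈ Ioo a b,
      α • ((1 - a) • y + a • z) + β • ((1 - b) • y + b • z) = (α + β) • ((1 - ν) • y + ν • z) := by
  refine ⟨(α * a + β * b) / (α + β), ⟨?_, ?_⟩, ?_⟩
  · rw [lt_div_iff₀ (by positivity)]; nlinarith
  · rw [div_lt_iff₀ (by positivity)]; nlinarith
  · have hν : (α + β) * ((α * a + β * b) / (α + β)) = α * a + β * b :=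
      mul_div_cancel₀ _ (by positivity)
    rw [smul_add (α + β), smul_smul, smul_smul, mul_one_sub, hν]
    module

/-- `‖u + v‖⁻¹ • (u + v)` is the midpoint of the short great-circle arc from `u` to `v`. -/
def ContainsSphericalMidpoints (K : Set E) : Prop :=
  ∀ ⦃u⦄, u ∈ K → ∀ ⦃v⦄, v ∈ K → ‖u‖ = 1 → ‖v‖ = 1 → LinearIndependent ℝ ![u, v] →
    ‖u + v‖⁻¹ • (u + v) ∈ K

def directionCone (K : Set E) : Set E := {x | x = 0 ∨ ‖x‖⁻¹ • x ∈ K}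

theorem smul_mem_directionCone {K : Set E} (hneg : ∀ x ∈ K, -x ∈ K) {x : E}
    (hx : x ∈ directionCone K) (c : ℝ) : c • x ∈ directionCone K := by
  rcases hx with rfl | hx
  · exact Or.inl (smul_zero c)
  rcases lt_trichotomy c 0 with hc | rfl | hc
  · right
    rw [← neg_smul_neg c x, inv_norm_smul_smul_of_pos (neg_pos.2 hc), norm_neg, smul_neg]
    exact hneg _ hx
  · exact Or.inl (zero_smul ℝ x)
  · exact Or.inr ((inv_norm_smul_smul_of_pos hc x).symm ▸ hx)

namespace ContainsSphericalMidpoints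

variable {K : Set E} {y z : E}

theorem inv_norm_smul_one_sub_smul_add_smul_mem (hK : ContainsSphericalMidpoints K)
    (hKc : IsClosed K) (hy : y ∈ K) (hz : z ∈ K) (hy1 : ‖y‖ = 1) (hz1 : ‖z‖ = 1)
    (hyz : LinearIndependent ℝ ![y, z]) {t : ℝ} (ht : t ∈ Icc (0 : ℝ) 1) :
    ‖(1 - t) • y + t • z‖⁻¹ • ((1 - t) • y + t • z) ∈ K := by
  set q : ℝ → E := fun t => (1 - t) • y + t • z
  set p : ℝ → E := fun t => ‖q t‖⁻¹ • q t
  have hq0 : ∀ t, q t ≠ 0 := fun t h => by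
    have := LinearIndependent.pair_iff.1 hyz _ _ h
    linarith [this.1, this.2]
  have hp1 : ∀ t, ‖p t‖ = 1 := fun t => norm_smul_inv_norm (hq0 t)
  have hpc : Continuous p :=
    ((by fun_prop : Continuous q).norm.inv₀ fun t => norm_ne_zero_iff.2 (hq0 t)).smul
      (by fun_prop)
  have hpind : ∀ a b, a ≠ b → LinearIndependent ℝ ![p a, p b] := fun a b hab => by
    rw [LinearIndependent.pair_smul_smul_iff (by simpa using hq0 a) (by simpa using hq0 b),
      LinearIndependent.pair_add_smul_add_smul_iff]
    exact ⟨hyz, fun h => hab (by linarith)⟩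
  have hgap : ∀ a ∈ Icc (0 : ℝ) 1 ∩ p ⁻¹' K, ∀ b ∈ Icc (0 : ℝ) 1 ∩ p ⁻¹' K, a < b →
      ∃ ν ∈ Icc (0 : ℝ) 1 ∩ p ⁻¹' K, a < ν ∧ ν < b := by
    rintro a ⟨ha, hpa⟩ b ⟨hb, hpb⟩ hab
    have hα : 0 < ‖q a‖⁻¹ := inv_pos.2 (norm_pos_iff.2 (hq0 a))
    have hβ : 0 < ‖q b‖⁻¹ := inv_pos.2 (norm_pos_iff.2 (hq0 b))
    obtain ⟨ν, hν, hsum⟩ := exists_mem_Ioo_smul_one_sub_smul_add_smul_eq y z hab hα hβ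
    have hpν : p ν ∈ K := by
      replace hsum : p a + p b = (‖q a‖⁻¹ + ‖q b‖⁻¹) • q ν := hsum
      simpa only [hsum, inv_norm_smul_smul_of_pos (add_pos hα hβ)] using
        hK hpa hpb (hp1 a) (hp1 b) (hpind a b hab.ne)
    exact ⟨ν, ⟨⟨ha.1.trans hν.1.le, hν.2.le.trans hb.2⟩, hpν⟩, hν⟩
  have hA : IsClosed (Icc (0 : ℝ) 1 ∩ p ⁻¹' K) := isClosed_Icc.inter (hKc.preimage hpc)
  have h0 : (0 : ℝ) ∈ Icc (0 : ℝ) 1 ∩ p ⁻¹' K := ⟨⟨le_rfl, zero_le_one⟩, by simpa [p, q, hy1]⟩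
  have h1 : (1 : ℝ) ∈ Icc (0 : ℝ) 1 ∩ p ⁻¹' K := ⟨⟨zero_le_one, le_rfl⟩, by simpa [p, q, hz1]⟩
  exact (Icc_subset_of_isClosed_of_exists_between hA h0 h1 hgap ht).2

theorem inv_norm_smul_add_smul_mem (hK : ContainsSphericalMidpoints K) (hKc : IsClosed K)
    (hy : y ∈ K) (hz : z ∈ K) (hy1 : ‖y‖ = 1) (hz1 : ‖z‖ = 1)
    (hyz : LinearIndependent ℝ ![y, z]) {s t : ℝ} (hs : 0 ≤ s) (ht : 0 ≤ t) (hst : 0 < s + t) :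
    ‖s • y + t • z‖⁻¹ • (s • y + t • z) ∈ K := by
  have hmem := hK.inv_norm_smul_one_sub_smul_add_smul_mem hKc hy hz hy1 hz1 hyz (t := t / (s + t))
    ⟨by positivity, (div_le_one hst).2 (by linarith)⟩
  have heq : s • y + t • z = (s + t) • ((1 - t / (s + t)) • y + (t / (s + t)) • z) := by
    rw [smul_add, smul_smul, smul_smul, mul_one_sub, mul_div_cancel₀ _ hst.ne',
      add_sub_cancel_right]
  rwa [heq, inv_norm_smul_smul_of_pos hst]

theorem add_mem_directionCone (hK : ContainsSphericalMidpoints K) (hKc : IsClosed K)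
    (hneg : ∀ x ∈ K, -x ∈ K) (hy : y ∈ directionCone K) (hz : z ∈ directionCone K) :
    y + z ∈ directionCone K := by
  rcases hy with rfl | hy
  · rwa [zero_add]
  rcases hz with rfl | hz
  · rw [add_zero]; exact Or.inr hy
  by_cases hyz : LinearIndependent ℝ ![y, z]
  · have hy0 : y ≠ 0 := by simpa using hyz.ne_zero 0
    have hz0 : z ≠ 0 := by simpa using hyz.ne_zero 1
    have hmem := hK.inv_norm_smul_add_smul_mem hKc hy hz (norm_smul_inv_norm hy0)
      (norm_smul_inv_norm hz0)
      ((LinearIndependent.pair_smul_smul_iff (by simpa using hy0) (by simpa using hz0)).2 hyz)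
      (norm_nonneg y) (norm_nonneg z) (by positivity)
    rw [smul_inv_smul₀ (norm_ne_zero_iff.2 hy0), smul_inv_smul₀ (norm_ne_zero_iff.2 hz0)] at hmem
    exact Or.inr hmem
  · simp only [linearIndependent_fin2, Matrix.cons_val_one, Matrix.cons_val_zero, not_and_or,
      not_not, not_forall] at hyz
    rcases hyz with rfl | ⟨a, rfl⟩
    · rw [add_zero]; exact Or.inr hy
    · rw [show a • z + z = (a + 1) • z by module]
      exact smul_mem_directionCone hneg (Or.inr hz) _

theorem span_subset_directionCone (hK : ContainsSphericalMidpoints K) (hKc : IsClosed K)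
    (hneg : ∀ x ∈ K, -x ∈ K) : (span ℝ (K ∩ sphere 0 1) : Set E) ⊆ directionCone K := by
  intro x hx
  induction hx using Submodule.span_induction with
  | mem x hx =>
    exact Or.inr (by rw [mem_sphere_zero_iff_norm.1 hx.2, inv_one, one_smul]; exact hx.1)
  | zero => exact Or.inl rfl
  | add y z _ _ hy hz => exact add_mem_directionCone hK hKc hneg hy hz
  | smul c y _ hy => exact smul_mem_directionCone hneg hy c

theorem sphere_subset_of_span_eq_top (hK : ContainsSphericalMidpoints K) (hKc : IsClosed K)
    (hneg : ∀ x ∈ K, -x ∈ K) (hspan : span ℝ (K ∩ sphere 0 1) = ⊤) : sphere 0 1 ⊆ K := by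
  intro x hx
  rw [mem_sphere_zero_iff_norm] at hx
  rcases hK.span_subset_directionCone hKc hneg (hspan ▸ mem_top : x ∈ _) with rfl | hcone
  · simp at hx
  · rwa [hx, inv_one, one_smul] at hcone

end ContainsSphericalMidpoints

theorem exists_noncolinear_unit_vectors_midpoint_escapes_general
    (n : ℕ) (hn : 1 ≤ n) (K : Set (EuclideanSpace ℝ (Fin n)))
    (hKcompact : IsCompact K) (hKconvex : Convex ℝ K) (hKsymm : K = -K)
    (hKsub : K ⊆ closedBall (0 : EuclideanSpace ℝ (Fin n)) 1)
    (hKindep : ∃ w : Fin n → EuclideanSpace ℝ (Fin n),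
      LinearIndependent ℝ w ∧ ∀ i, w i ∈ K ∧ ‖w i‖ = 1)
    (hKne : K ≠ closedBall (0 : EuclideanSpace ℝ (Fin n)) 1) :
    ∃ u v : EuclideanSpace ℝ (Fin n), u ∈ K ∧ v ∈ K ∧ ‖u‖ = 1 ∧ ‖v‖ = 1 ∧
      ¬ (∃ c : ℝ, u = c • v ∨ v = c • u) ∧ ‖u + v‖⁻¹ • (u + v) ∉ K := by
  by_contra hcon
  have hK : ContainsSphericalMidpoints K := fun u hu v hv hu1 hv1 huv => by
    by_contra h
    exact hcon ⟨u, v, hu, hv, hu1, hv1, huv.not_exists_eq_smul, h⟩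
  have hneg : ∀ x ∈ K, -x ∈ K := fun x hx => by
    rw [hKsymm]; exact neg_mem_neg.2 hx
  obtain ⟨w, hw, hwK⟩ := hKindep
  have hspan : span ℝ (K ∩ sphere 0 1) = ⊤ :=
    eq_top_iff.2 <| (hw.span_eq_top_of_card_eq_finrank' (by simp)).ge.trans <|
      span_mono <| range_subset_iff.2 fun i => ⟨(hwK i).1, mem_sphere_zero_iff_norm.2 (hwK i).2⟩
  have hsphere := hK.sphere_subset_of_span_eq_top hKcompact.isClosed hneg hspan
  have : Nonempty (Fin n) := ⟨⟨0, hn⟩⟩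
  exact hKne <| hKsub.antisymm <|
    convexHull_sphere_eq_closedBall (0 : EuclideanSpace ℝ (Fin n)) zero_le_one ▸
      convexHull_min hsphere hKconvex

/-- If K is a compact, convex, origin-symmetric subset of the Euclidean unit ball 𝔹ⁿ
with nonempty interior, containing n linearly independent unit vectors, and K ≠ 𝔹ⁿ,
then there exist two non-colinear unit vectors u, v ∈ K such that the normalization of
u + v does not belong to K. -/
theorem exists_noncolinear_unit_vectors_midpoint_escapes
    (n : ℕ) (hn : 1 ≤ n) (K : Set (EuclideanSpace ℝ (Fin n)))
    (hKcompact : IsCompact K) (hKconvex : Convex ℝ K) (hKsymm : K = -K)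
    (hKint : (interior K).Nonempty)
    (hKsub : K ⊆ closedBall (0 : EuclideanSpace ℝ (Fin n)) 1)
    (hKindep : ∃ w : Fin n → EuclideanSpace ℝ (Fin n),
      LinearIndependent ℝ w ∧ ∀ i, w i ∈ K ∧ ‖w i‖ = 1)
    (hKne : K ≠ closedBall (0 : EuclideanSpace ℝ (Fin n)) 1) :
    ∃ u v : EuclideanSpace ℝ (Fin n), u ∈ K ∧ v ∈ K ∧ ‖u‖ = 1 ∧ ‖v‖ = 1 ∧
      ¬ (∃ c : ℝ, u = c • v ∨ v = c • u) ∧ ‖u + v‖⁻¹ • (u + v) ∉ K :=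
  exists_noncolinear_unit_vectors_midpoint_escapes_general n hn K hKcompact hKconvex hKsymm hKsub
    hKindep hKne
end

section
/- Let f : ℝⁿ → ℝ be differentiable (ℝⁿ equipped with any norm ‖·‖, with dual norm ‖·‖*), let 0 < ν ≤ 1 and L > 0 be such that |f(y) − f(x) − ⟨f'(x), y − x⟩| ≤ (L/(1+ν))·‖y − x‖^{1+ν} for all x, y, and suppose f(x) ≥ f* for all x. Fix 0 < ξ < 1 and x₀ ∈ ℝⁿ, and let (x_k) be any sequence such that for each k ≥ 0, x_{k+1} = x_k − h_k·d_k where d_k satisfies ‖d_k‖ = 1 and ⟨f'(x_k), d_k⟩ = ‖f'(x_k)‖*, and h_k = ξ·((1+ν)/L)^{1/ν}·‖f'(x_k)‖*^{1/ν}. Then for every K ≥ 0, ξ·(1 − ξ^ν)·((1+ν)/L)^{1/ν}·Σ_{k=0}^{K} ‖f'(x_k)‖*^{1+1/ν} ≤ f(x₀) − f*. -/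
open Finset

/-- Convergence estimate for the gradient method with Hölder-type step size: summing the
per-step decreases gives
`ξ(1−ξ^ν)((1+ν)/L)^{1/ν} Σ_{k=0}^{K} ‖f'(x_k)‖*^{1+1/ν} ≤ f(x₀) − f*`. -/
theorem gradient_method_sum_bound
    {E : Type*} [NormedAddCommGroup E] [NormedSpace ℝ E] [FiniteDimensional ℝ E]
    (f : E → ℝ) (f' : E → (E →L[ℝ] ℝ))
    (hdiff : ∀ x, HasFDerivAt f (f' x) x)
    (ν L : ℝ) (hν0 : 0 < ν) (hν1 : ν ≤ 1) (hL : 0 < L)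
    (happrox : ∀ x y : E, |f y - f x - f' x (y - x)| ≤ L / (1 + ν) * ‖y - x‖ ^ (1 + ν))
    (fstar : ℝ) (hlb : ∀ x : E, fstar ≤ f x)
    (ξ : ℝ) (hξ0 : 0 < ξ) (hξ1 : ξ < 1)
    (x : ℕ → E) (d : ℕ → E)
    (hd_norm : ∀ k : ℕ, ‖d k‖ = 1)
    (hd_steepest : ∀ k : ℕ, f' (x k) (d k) = ‖f' (x k)‖)
    (hstep : ∀ k : ℕ,
      x (k + 1) = x k - (ξ * ((1 + ν) / L) ^ (1 / ν) * ‖f' (x k)‖ ^ (1 / ν)) • d k) :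
    ∀ K : ℕ,
      ξ * (1 - ξ ^ ν) * ((1 + ν) / L) ^ (1 / ν) *
        ∑ k ∈ range (K + 1), ‖f' (x k)‖ ^ (1 + 1 / ν) ≤ f (x 0) - fstar := by
  have hν0' : (0:ℝ) < 1 + ν := by linarith
  have hbase : (0:ℝ) < (1 + ν) / L := div_pos hν0' hL
  set A : ℝ := ((1 + ν) / L) ^ (1 / ν) with hA
  have hApos : 0 < A := Real.rpow_pos_of_pos hbase _
  have hinvν : 0 < 1 / ν := by positivity
  have key : ∀ k : ℕ,
      ξ * (1 - ξ ^ ν) * A * ‖f' (x k)‖ ^ (1 + 1 / ν) ≤ f (x k) - f (x (k + 1)) := by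
    intro k
    set g : ℝ := ‖f' (x k)‖ with hg
    have hg0 : 0 ≤ g := norm_nonneg _
    set h : ℝ := ξ * A * g ^ (1 / ν) with hh
    have hh0 : 0 ≤ h := by positivity
    have hy : x (k + 1) - x k = -(h • d k) := by rw [hstep k]; abel
    have hnorm : ‖x (k + 1) - x k‖ = h := by
      rw [hy, norm_neg, norm_smul, hd_norm, mul_one, Real.norm_eq_abs, abs_of_nonneg hh0]
    have hlin : f' (x k) (x (k + 1) - x k) = -(h * g) := by
      rw [hy, map_neg, map_smul, smul_eq_mul, hd_steepest k]
    have habs := happrox (x k) (x (k + 1))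
    rw [hnorm, hlin] at habs
    have hub : f (x (k + 1)) - f (x k) + h * g ≤ L / (1 + ν) * h ^ (1 + ν) := by
      have := (abs_le.mp habs).2
      linarith
    -- rpow algebra
    have hrA : L / (1 + ν) * h ^ (1 + ν) = ξ * ξ ^ ν * A * g ^ (1 + 1 / ν) := by
      have h1 : h ^ (1 + ν)
          = ξ ^ (1 + ν) * (((1 + ν) / L) ^ (1 / ν)) ^ (1 + ν) * (g ^ (1 / ν)) ^ (1 + ν) := by
        rw [hh, hA, Real.mul_rpow (by positivity) (by positivity),
          Real.mul_rpow (le_of_lt hξ0) (by positivity)]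
      have h2 : (((1 + ν) / L) ^ (1 / ν)) ^ (1 + ν)
          = ((1 + ν) / L) * ((1 + ν) / L) ^ (1 / ν) := by
        rw [← Real.rpow_mul hbase.le]
        have he : 1 / ν * (1 + ν) = 1 + 1 / ν := by field_simp; ring
        rw [he, Real.rpow_add hbase, Real.rpow_one]
      have h3 : (g ^ (1 / ν)) ^ (1 + ν) = g ^ (1 + 1 / ν) := by
        rw [← Real.rpow_mul hg0]
        congr 1
        field_simp; ring
      have h4 : ξ ^ (1 + ν) = ξ * ξ ^ ν := by
        rw [Real.rpow_add hξ0, Real.rpow_one]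
      rw [h1, h2, h3, h4]
      field_simp
      ring
    have h5 : g ^ (1 + 1 / ν) = g * g ^ (1 / ν) := by
      rw [Real.rpow_add' hg0 (by positivity), Real.rpow_one]
    have hhg : h * g = ξ * A * g ^ (1 + 1 / ν) := by rw [hh, h5]; ring
    have hkey : ξ * (1 - ξ ^ ν) * A * g ^ (1 + 1 / ν)
        = h * g - L / (1 + ν) * h ^ (1 + ν) := by rw [hhg, hrA]; ring
    linarith
  intro K
  have tele : ∀ K : ℕ,
      ∑ k ∈ range (K + 1), ξ * (1 - ξ ^ ν) * A * ‖f' (x k)‖ ^ (1 + 1 / ν)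
        ≤ f (x 0) - f (x (K + 1)) := by
    intro K
    induction K with
    | zero => simpa using key 0
    | succ n ih =>
        rw [Finset.sum_range_succ]
        have := key (n + 1)
        linarith
  calc ξ * (1 - ξ ^ ν) * A * ∑ k ∈ range (K + 1), ‖f' (x k)‖ ^ (1 + 1 / ν)
      = ∑ k ∈ range (K + 1), ξ * (1 - ξ ^ ν) * A * ‖f' (x k)‖ ^ (1 + 1 / ν) := by
        rw [Finset.mul_sum]
    _ ≤ f (x 0) - f (x (K + 1)) := tele K
    _ ≤ f (x 0) - fstar := by have := hlb (x (K + 1)); linarith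
end
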